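/- arXiv:2509.02843 — 2 statements merged into one kernel-verified Lean document; each statement's English description precedes it below -/
import Mathlib

section
/- For every real number α such that α − 4k ∈ (1,3) for some integer k, the matrix b₂(α) is special unitary: b₂(α)† · b₂(α) = I₂ and det b₂(α) = 1, i.e. b₂(α) ∈ SU(2). -/
open Complex Matrix

/-- The normalized braid generator `b₂(α)` of the non-semisimple Ising anyon model on the
single-qubit space (one neglecton of parameter `α` and two Ising anyons). -/
noncomputable def b2 (α : ℝ) : Matrix (Fin 2) (Fin 2) ℂ :=
  Complex.exp (-(Complex.I * (Real.pi / 4))) •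
    !![(1 + Complex.I) / (1 - Complex.exp (Complex.I * (Real.pi * α / 2))),
       Complex.exp (-(Complex.I * (Real.pi / 4))) *
         ((((1 - Real.cot (Real.pi * α / 4) ^ 2) / 2 : ℝ) : ℂ) ^ ((1 : ℂ) / 2));
       Complex.exp (-(Complex.I * (Real.pi / 4))) *
         ((((1 - Real.cot (Real.pi * α / 4) ^ 2) / 2 : ℝ) : ℂ) ^ ((1 : ℂ) / 2)),
       (1 + Complex.I) / (1 - Complex.exp (-(Complex.I * (Real.pi * α / 2))))]

/-!
Up to the scalar `e^{-iπ/4}`, whose products with `1 + i` and with itself are `√2` and `-i`,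
the matrix `b₂(α)` has the shape `[[x, -ȳ], [y, x̄]]` with `x = √2 / (1 - e^{2iθ})`,
`y = -i √((1 - cot² θ) / 2)` and `θ = πα/4`. Such a matrix lies in `SU(2)` iff
`|x|² + |y|² = 1`, and since `|1 - e^{2iθ}| = 2 |sin θ|` this is the identity
`1 / (2 sin² θ) + (1 - cot² θ) / 2 = 1`. The hypothesis on `α` says `cos 2θ < 0`, i.e.
`cos² θ < sin² θ`: this makes `sin θ ≠ 0` and the radicand nonnegative, so that the principal
square root in `b₂(α)` is real.
-/

open Real

namespace Matrix

theorem mem_specialUnitaryGroup_fin_two_iff_star_mul_self_add {R : Type*} [CommRing R]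
    [StarRing R] {x y : R} :
    !![x, -star y; y, star x] ∈ specialUnitaryGroup (Fin 2) R ↔
      star x * x + star y * y = 1 := by
  have hstar : star !![x, -star y; y, star x] = !![star x, star y; -y, x] := by
    ext i j; fin_cases i <;> fin_cases j <;> simp
  rw [mem_specialUnitaryGroup_iff, mem_unitaryGroup_iff', hstar, mul_fin_two, one_fin_two,
    det_fin_two_of]
  simp only [EmbeddingLike.apply_eq_iff_eq, vecCons_inj, and_true]
  grind

theorem mem_specialUnitaryGroup_fin_two_iff_norm_sq_add {𝕜 : Type*} [RCLike 𝕜] {x y : 𝕜} :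
    !![x, -star y; y, star x] ∈ specialUnitaryGroup (Fin 2) 𝕜 ↔ ‖x‖ ^ 2 + ‖y‖ ^ 2 = 1 := by
  rw [mem_specialUnitaryGroup_fin_two_iff_star_mul_self_add, RCLike.star_def,
    RCLike.conj_mul, RCLike.conj_mul]
  exact_mod_cast Iff.rfl

end Matrix

namespace Real

theorem cos_pi_mul_div_two_neg {α : ℝ} (h : ∃ k : ℤ, 1 < α - 4 * k ∧ α - 4 * k < 3) :
    cos (π * α / 2) < 0 := by
  obtain ⟨k, hk₁, hk₃⟩ := h
  rw [← cos_sub_int_mul_two_pi _ k]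
  apply cos_neg_of_pi_div_two_lt_of_lt <;> nlinarith [pi_pos]

theorem cos_sq_lt_sin_sq_of_cos_two_mul_neg {θ : ℝ} (h : cos (2 * θ) < 0) :
    cos θ ^ 2 < sin θ ^ 2 := by
  rwa [cos_two_mul', sub_neg] at h

theorem sin_ne_zero_of_cos_two_mul_neg {θ : ℝ} (h : cos (2 * θ) < 0) : sin θ ≠ 0 := by
  intro hsin
  have := cos_sq_lt_sin_sq_of_cos_two_mul_neg h
  rw [hsin] at this
  nlinarith

theorem cot_sq_lt_one_of_cos_two_mul_neg {θ : ℝ} (h : cos (2 * θ) < 0) : cot θ ^ 2 < 1 := by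
  rw [cot_eq_cos_div_sin, div_pow, div_lt_one (by positivity [sin_ne_zero_of_cos_two_mul_neg h])]
  exact cos_sq_lt_sin_sq_of_cos_two_mul_neg h

theorem inv_two_mul_sin_sq_add_one_sub_cot_sq_div_two {θ : ℝ} (h : sin θ ≠ 0) :
    (2 * sin θ ^ 2)⁻¹ + (1 - cot θ ^ 2) / 2 = 1 := by
  rw [cot_eq_cos_div_sin]
  field_simp
  linear_combination -sin_sq_add_cos_sq θ

end Real

namespace Complex

theorem ofReal_cpow_one_half {r : ℝ} (hr : 0 ≤ r) : (r : ℂ) ^ ((1 : ℂ) / 2) = (√r : ℂ) := by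
  rw [Real.sqrt_eq_rpow, ofReal_cpow hr]
  norm_num

theorem exp_neg_I_mul_pi_div_four_mul_one_add_I : exp (-(I * (π / 4))) * (1 + I) = √2 := by
  rw [show -(I * (π / 4)) = ((-(π / 4) : ℝ) : ℂ) * I by push_cast; ring, exp_mul_I,
    ← ofReal_cos, ← ofReal_sin, Real.cos_neg, Real.sin_neg, cos_pi_div_four, sin_pi_div_four]
  push_cast
  linear_combination (-(√2 : ℂ) / 2) * I_sq

theorem exp_neg_I_mul_pi_div_four_mul_self :
    exp (-(I * (π / 4))) * exp (-(I * (π / 4))) = -I := by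
  rw [← exp_add, ← exp_neg_pi_div_two_mul_I]
  ring_nf

theorem norm_sqrt_two_div_one_sub_exp_I_mul_sq (φ : ℝ) :
    ‖(√2 : ℂ) / (1 - exp (I * φ))‖ ^ 2 = (2 * Real.sin (φ / 2) ^ 2)⁻¹ := by
  rw [norm_div, norm_sub_rev, norm_exp_I_mul_ofReal_sub_one, div_pow, norm_real,
    Real.norm_eq_abs, Real.norm_eq_abs, sq_abs, sq_abs, Real.sq_sqrt zero_le_two]
  field_simp

end Complex

namespace b2

noncomputable def diag (α : ℝ) : ℂ := √2 / (1 - exp (I * (π * α / 2)))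

noncomputable def offDiag (α : ℝ) : ℂ := -I * √((1 - Real.cot (π * α / 4) ^ 2) / 2)

theorem norm_diag_sq (α : ℝ) : ‖diag α‖ ^ 2 = (2 * Real.sin (π * α / 4) ^ 2)⁻¹ := by
  have h := norm_sqrt_two_div_one_sub_exp_I_mul_sq (π * α / 2)
  push_cast at h
  rw [diag, h]
  ring_nf

theorem norm_offDiag_sq {α : ℝ} (h : Real.cot (π * α / 4) ^ 2 ≤ 1) :
    ‖offDiag α‖ ^ 2 = (1 - Real.cot (π * α / 4) ^ 2) / 2 := by
  rw [offDiag, norm_mul, norm_neg, norm_I, one_mul, norm_real, Real.norm_eq_abs, sq_abs,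
    Real.sq_sqrt (by linarith)]

end b2

theorem b2_eq_of_cot_sq_le_one {α : ℝ} (h : Real.cot (π * α / 4) ^ 2 ≤ 1) :
    b2 α = !![b2.diag α, -star (b2.offDiag α); b2.offDiag α, star (b2.diag α)] := by
  have hr : 0 ≤ (1 - Real.cot (π * α / 4) ^ 2) / 2 := by linarith
  have hstar : star (b2.diag α) = √2 / (1 - exp (-(I * (π * α / 2)))) := by
    simp [b2.diag, ← exp_conj, map_ofNat]
  rw [hstar, b2, ofReal_cpow_one_half hr, b2.diag, b2.offDiag]
  ext i j
  fin_cases i <;> fin_cases j <;>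
    simp only [Matrix.smul_apply, of_apply, cons_val', cons_val_zero, cons_val_one,
      empty_val', cons_val_fin_one, smul_eq_mul, Fin.zero_eta, Fin.mk_one]
  · rw [← mul_div_assoc, exp_neg_I_mul_pi_div_four_mul_one_add_I]
  · simp [← mul_assoc, exp_neg_I_mul_pi_div_four_mul_self]
  · rw [← mul_assoc, exp_neg_I_mul_pi_div_four_mul_self, neg_mul]
  · rw [← mul_div_assoc, exp_neg_I_mul_pi_div_four_mul_one_add_I]

/-- For `α` congruent to a value in `(1,3)` modulo 4, the braid generator `b₂(α)` is
special unitary. -/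
theorem b2_mem_specialUnitaryGroup (α : ℝ)
    (h : ∃ k : ℤ, 1 < α - 4 * k ∧ α - 4 * k < 3) :
    (b2 α)ᴴ * b2 α = 1 ∧ (b2 α).det = 1 ∧
      b2 α ∈ Matrix.specialUnitaryGroup (Fin 2) ℂ := by
  have hcos : Real.cos (2 * (π * α / 4)) < 0 := by
    rw [show 2 * (π * α / 4) = π * α / 2 by ring]
    exact cos_pi_mul_div_two_neg h
  have hcot := (cot_sq_lt_one_of_cos_two_mul_neg hcos).le
  have hSU : b2 α ∈ Matrix.specialUnitaryGroup (Fin 2) ℂ := by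
    rw [b2_eq_of_cot_sq_le_one hcot, Matrix.mem_specialUnitaryGroup_fin_two_iff_norm_sq_add,
      b2.norm_diag_sq, b2.norm_offDiag_sq hcot]
    exact inv_two_mul_sin_sq_add_one_sub_cot_sq_div_two (sin_ne_zero_of_cos_two_mul_neg hcos)
  exact ⟨Matrix.mem_unitaryGroup_iff'.1 hSU.1, hSU.2, hSU⟩
end

section
/- For every real number α with e^{iπα/2} ≠ 1, the trace of b₂(α) equals √2, independently of α; that is, e^{−iπ/4}·[(1+i)/(1−e^{iπα/2}) + (1+i)/(1−e^{−iπα/2})] = √2. Consequently, for α with α − 4k ∈ (1,3) for some integer k (where b₂(α) ∈ SU(2)), the eigenvalues of b₂(α) are e^{iπ/4} and e^{−iπ/4}. -/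
open Complex Matrix

/-!
Write `t = e^{iπα/2}` and `θ = πα/2`. The diagonal entries `(1+i)/(1-t)` and `(1+i)/(1-t⁻¹)` sum
to `1+i`, and `e^{-iπ/4}(1+i) = √2`, so the trace is `√2` as soon as `t ≠ 1`. Their product is
`2i/((1-t)(1-t⁻¹)) = i/(1 - cos θ)`, while `(1 - cot²(θ/2))/2 = -cos θ/(1 - cos θ)`; with
`e^{-iπ/2} = -i` this gives `det b₂(α) = 1`. Hence the characteristic polynomial is
`x² - √2 x + 1 = (x - e^{iπ/4})(x - e^{-iπ/4})`.
-/

open scoped Real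

theorem div_one_sub_add_div_one_sub_inv {K : Type*} [Field K] (a : K) {t : K} (h0 : t ≠ 0)
    (h1 : t ≠ 1) : a / (1 - t) + a / (1 - t⁻¹) = a := by
  field_simp
  ring

theorem Real.one_sub_cot_sq_div_two {x : ℝ} (hx : Real.cos (2 * x) ≠ 1) :
    (1 - Real.cot x ^ 2) / 2 = -Real.cos (2 * x) / (1 - Real.cos (2 * x)) := by
  have hsin_sq : 1 - Real.cos (2 * x) = 2 * Real.sin x ^ 2 := by
    rw [Real.cos_two_mul, Real.cos_sq']; ring
  have hsin : Real.sin x ≠ 0 := fun h => hx (by linear_combination -hsin_sq - 2 * Real.sin x * h)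
  rw [hsin_sq, Real.cot_eq_cos_div_sin, Real.cos_two_mul]
  field_simp
  linear_combination Real.sin_sq_add_cos_sq x

theorem Complex.exp_I_mul_add_exp_neg (x : ℂ) : exp (I * x) + exp (-(I * x)) = 2 * cos x := by
  rw [two_cos, mul_comm, neg_mul]

theorem Complex.cpow_one_div_two_sq (z : ℂ) : (z ^ ((1 : ℂ) / 2)) ^ 2 = z := by
  rw [one_div]
  exact cpow_ofNat_inv_pow z 2

theorem Complex.exp_neg_I_mul_pi_div_four : exp (-(I * (π / 4))) = (√2 : ℂ) / 2 * (1 - I) := by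
  rw [show -(I * (π / 4)) = (-(π / 4) : ℝ) * I by push_cast; ring, exp_mul_I,
    ← ofReal_cos, ← ofReal_sin, Real.cos_neg, Real.sin_neg, Real.cos_pi_div_four,
    Real.sin_pi_div_four]
  push_cast
  ring

theorem Complex.exp_I_mul_pi_div_four : exp (I * (π / 4)) = (√2 : ℂ) / 2 * (1 + I) := by
  rw [show I * (π / 4) = (π / 4 : ℝ) * I by push_cast; ring, exp_mul_I,
    ← ofReal_cos, ← ofReal_sin, Real.cos_pi_div_four, Real.sin_pi_div_four]
  push_cast
  ring

theorem Complex.exp_neg_I_mul_pi_div_four_sq : exp (-(I * (π / 4))) ^ 2 = -I := by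
  rw [← exp_nat_mul, show ((2 : ℕ) : ℂ) * -(I * (π / 4)) = -π / 2 * I by push_cast; ring,
    exp_neg_pi_div_two_mul_I]

theorem Complex.exp_I_mul_pi_div_four_add_exp_neg :
    exp (I * (π / 4)) + exp (-(I * (π / 4))) = (√2 : ℝ) := by
  rw [exp_I_mul_pi_div_four, exp_neg_I_mul_pi_div_four]
  ring

theorem Complex.exp_I_mul_pi_div_four_mul_exp_neg :
    exp (I * (π / 4)) * exp (-(I * (π / 4))) = 1 := by
  rw [← exp_add, add_neg_cancel, exp_zero]

theorem Complex.exp_neg_I_mul_pi_div_four_mul_one_add_I_s2 :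
    exp (-(I * (π / 4))) * (1 + I) = (√2 : ℝ) := by
  rw [exp_neg_I_mul_pi_div_four]
  linear_combination -((√2 : ℝ) : ℂ) / 2 * I_sq

theorem Complex.exp_I_mul_pi_mul_div_two_eq_one_iff {α : ℝ} :
    exp (I * (π * α / 2)) = 1 ↔ ∃ n : ℤ, α = 4 * n := by
  rw [exp_eq_one_iff]
  refine exists_congr fun n => ⟨fun h => ?_, fun h => by rw [h]; push_cast; ring⟩
  have hπI : (π : ℂ) * I ≠ 0 := mul_ne_zero (ofReal_ne_zero.2 Real.pi_ne_zero) I_ne_zero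
  have : ((α - 4 * n : ℝ) : ℂ) * (π * I) = 0 := by push_cast; linear_combination 2 * h
  rw [mul_eq_zero, or_iff_left hπI, ofReal_eq_zero, sub_eq_zero] at this
  exact this

theorem Matrix.spectrum_fin_two_eq_pair {K : Type*} [Field K] (M : Matrix (Fin 2) (Fin 2) K)
    {a b : K} (htr : M.trace = a + b) (hdet : M.det = a * b) : spectrum K M = {a, b} := by
  ext μ
  have hfactor :
      M.charpoly = (Polynomial.X - Polynomial.C a) * (Polynomial.X - Polynomial.C b) := by
    rw [charpoly_fin_two, htr, hdet, Polynomial.C_add, Polynomial.C_mul]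
    ring
  simp [mem_spectrum_iff_isRoot_charpoly, hfactor, sub_eq_zero]

theorem trace_b2 (α : ℝ) : (b2 α).trace =
    exp (-(I * (π / 4))) * ((1 + I) / (1 - exp (I * (π * α / 2))) +
      (1 + I) / (1 - exp (-(I * (π * α / 2))))) := by
  rw [b2, trace_smul, trace_fin_two_of, smul_eq_mul]

theorem b2_diag_sum_eq_sqrt_two {α : ℝ} (hα : exp (I * (π * α / 2)) ≠ 1) :
    exp (-(I * (π / 4))) * ((1 + I) / (1 - exp (I * (π * α / 2))) +
      (1 + I) / (1 - exp (-(I * (π * α / 2))))) = (√2 : ℝ) := by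
  rw [Complex.exp_neg (I * (π * α / 2)), div_one_sub_add_div_one_sub_inv _ (exp_ne_zero _) hα,
    exp_neg_I_mul_pi_div_four_mul_one_add_I_s2]

theorem det_b2 {α : ℝ} (hα : exp (I * (π * α / 2)) ≠ 1) : (b2 α).det = 1 := by
  have ht0 := exp_ne_zero (I * (π * α / 2))
  have hsum : exp (I * (π * α / 2)) + (exp (I * (π * α / 2)))⁻¹ =
      2 * Real.cos (2 * (π * α / 4)) := by
    rw [← Complex.exp_neg, exp_I_mul_add_exp_neg, ofReal_cos]; push_cast; ring_nf
  rw [b2, det_smul, det_fin_two_of, Fintype.card_fin, Complex.exp_neg (I * (π * α / 2)),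
    show ∀ e w : ℂ, e * w * (e * w) = e ^ 2 * w ^ 2 by intros; ring,
    exp_neg_I_mul_pi_div_four_sq, cpow_one_div_two_sq]
  generalize exp (I * (π * α / 2)) = t at hα ht0 hsum
  have hprod : (1 - t) * (1 - t⁻¹) = 2 - 2 * Real.cos (2 * (π * α / 4)) := by
    linear_combination (mul_inv_cancel₀ ht0) - hsum
  have hprod_ne : (1 - t) * (1 - t⁻¹) ≠ 0 :=
    mul_ne_zero (sub_ne_zero.2 hα.symm) (sub_ne_zero.2 fun h => hα (inv_eq_one.1 h.symm))
  have hc : Real.cos (2 * (π * α / 4)) ≠ 1 := fun h => hprod_ne (by rw [hprod, h]; norm_num)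
  rw [div_mul_div_comm, hprod, Real.one_sub_cot_sq_div_two hc]
  generalize Real.cos (2 * (π * α / 4)) = c at hc
  have hc' : (1 : ℂ) - c ≠ 0 := by exact_mod_cast sub_ne_zero.2 hc.symm
  push_cast
  field_simp
  linear_combination (2 * (c : ℂ) - 2 - I) * I_sq

/-- The trace of `b₂(α)` equals `√2` independently of `α`, and consequently for `α`
congruent to a value in `(1,3)` mod 4 (where `b₂(α) ∈ SU(2)`) the eigenvalues of `b₂(α)`
are `e^{iπ/4}` and `e^{-iπ/4}`. -/
theorem trace_b2_eq_sqrt_two :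
    (∀ α : ℝ, Complex.exp (Complex.I * (Real.pi * α / 2)) ≠ 1 →
      Complex.exp (-(Complex.I * (Real.pi / 4))) *
        ((1 + Complex.I) / (1 - Complex.exp (Complex.I * (Real.pi * α / 2))) +
         (1 + Complex.I) / (1 - Complex.exp (-(Complex.I * (Real.pi * α / 2)))))
        = (Real.sqrt 2 : ℂ) ∧
      (b2 α).trace = (Real.sqrt 2 : ℂ)) ∧
    (∀ α : ℝ, (∃ k : ℤ, 1 < α - 4 * k ∧ α - 4 * k < 3) →
      spectrum ℂ (b2 α) =
        {Complex.exp (Complex.I * (Real.pi / 4)), Complex.exp (-(Complex.I * (Real.pi / 4)))}) := by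
  refine ⟨fun α hα => ⟨b2_diag_sum_eq_sqrt_two hα, (trace_b2 α).trans
    (b2_diag_sum_eq_sqrt_two hα)⟩, ?_⟩
  rintro α ⟨k, hk1, hk3⟩
  have hα : exp (I * (π * α / 2)) ≠ 1 := by
    rw [Ne, exp_I_mul_pi_mul_div_two_eq_one_iff]
    rintro ⟨n, rfl⟩
    have h1 : (1 : ℝ) < 4 * ((n - k : ℤ) : ℝ) := by push_cast; linarith
    have h3 : 4 * ((n - k : ℤ) : ℝ) < 3 := by push_cast; linarith
    norm_cast at h1 h3
    omega
  refine spectrum_fin_two_eq_pair _ ?_ ?_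
  · rw [trace_b2, b2_diag_sum_eq_sqrt_two hα, exp_I_mul_pi_div_four_add_exp_neg]
  · rw [det_b2 hα, exp_I_mul_pi_div_four_mul_exp_neg]
end
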